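/- arXiv:1806.00743 — 8 statements merged into one kernel-verified Lean document; each statement's English description precedes it below -/
import Mathlib

section
/- If F is monotone and hemicontinuous on a closed convex set M, then u ∈ M satisfies ⟨Fu - f, v - u⟩ ≥ 0 for all v ∈ M if and only if u satisfies the Minty formulation ⟨Fv - f, v - u⟩ ≥ 0 for all v ∈ M. -/
/-! Monotonicity gives `⟪F v - f, v - u⟫ ≥ ⟪F u - f, v - u⟫`, hence Stampacchia implies Minty.
Conversely, testing the Minty inequality at `u + t • (v - u) ∈ M` and dividing by `t > 0` gives
`⟪F (u + t • (v - u)) - f, v - u⟫ ≥ 0` for `t ∈ (0, 1]`; hemicontinuity lets `t → 0⁺`. -/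

open RealInnerProductSpace Set

lemma le_apply_zero_of_forall_Ioc {g : ℝ → ℝ} {c : ℝ} (hg : ContinuousOn g (Icc 0 1))
    (h : ∀ t ∈ Ioc 0 1, c ≤ g t) : c ≤ g 0 := by
  have hclosed : IsClosed (Icc 0 1 ∩ g ⁻¹' Ici c) :=
    hg.preimage_isClosed_of_isClosed isClosed_Icc isClosed_Ici
  have hsub : closure (Ioc (0 : ℝ) 1) ⊆ Icc 0 1 ∩ g ⁻¹' Ici c :=
    closure_minimal (fun t ht => ⟨Ioc_subset_Icc_self ht, h t ht⟩) hclosed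
  rw [closure_Ioc zero_ne_one] at hsub
  exact (hsub ⟨le_rfl, zero_le_one⟩).2

section VariationalInequality

variable {H : Type*} [NormedAddCommGroup H] [InnerProductSpace ℝ H] {M : Set H} {F : H → H}
  {f u : H}

lemma minty_of_stampacchia (hmono : ∀ u ∈ M, ∀ v ∈ M, ⟪F u - F v, u - v⟫ ≥ 0) (hu : u ∈ M)
    (h : ∀ v ∈ M, ⟪F u - f, v - u⟫ ≥ 0) : ∀ v ∈ M, ⟪F v - f, v - u⟫ ≥ 0 := by
  intro v hv
  have hsplit : ⟪F v - f, v - u⟫ = ⟪F v - F u, v - u⟫ + ⟪F u - f, v - u⟫ := by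
    rw [← inner_add_left, sub_add_sub_cancel]
  linarith [hmono v hv u hu, h v hv]

lemma stampacchia_of_minty (hMc : Convex ℝ M) (hu : u ∈ M)
    (hhemi : ∀ v ∈ M, ContinuousOn (fun t : ℝ => ⟪F (u + t • (v - u)), v - u⟫) (Icc 0 1))
    (h : ∀ v ∈ M, ⟪F v - f, v - u⟫ ≥ 0) : ∀ v ∈ M, ⟪F u - f, v - u⟫ ≥ 0 := by
  intro v hv
  have hsegment : ∀ t ∈ Ioc (0 : ℝ) 1, ⟪f, v - u⟫ ≤ ⟪F (u + t • (v - u)), v - u⟫ := by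
    intro t ht
    have hmin := h _ (hMc.add_smul_sub_mem hu hv (Ioc_subset_Icc_self ht))
    rw [add_sub_cancel_left, inner_sub_left, real_inner_smul_right, real_inner_smul_right,
      ← mul_sub] at hmin
    exact sub_nonneg.mp (nonneg_of_mul_nonneg_right hmin ht.1)
  have hlim := le_apply_zero_of_forall_Ioc (hhemi v hv) hsegment
  simp only [zero_smul, add_zero] at hlim
  rw [inner_sub_left]
  linarith

end VariationalInequality

theorem stmt_2_general {H : Type*} [NormedAddCommGroup H] [InnerProductSpace ℝ H]
    (M : Set H) (hMc : Convex ℝ M)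
    (F : H → H)
    (hmono : ∀ u ∈ M, ∀ v ∈ M, ⟪F u - F v, u - v⟫ ≥ 0)
    (hhemi : ∀ u ∈ M, ∀ w ∈ M, ∀ h : H,
      ContinuousOn (fun t : ℝ => ⟪F (u + t • (w - u)), h⟫) (Set.Icc 0 1))
    (f : H) (u : H) (hu : u ∈ M) :
    (∀ v ∈ M, ⟪F u - f, v - u⟫ ≥ 0) ↔ (∀ v ∈ M, ⟪F v - f, v - u⟫ ≥ 0) :=
  ⟨minty_of_stampacchia hmono hu,
    stampacchia_of_minty hMc hu fun v hv => hhemi u hu v hv (v - u)⟩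

theorem stmt_2 {H : Type*} [NormedAddCommGroup H] [InnerProductSpace ℝ H]
    (M : Set H) (hM : IsClosed M) (hMc : Convex ℝ M)
    (F : H → H)
    (hmono : ∀ u ∈ M, ∀ v ∈ M, ⟪F u - F v, u - v⟫ ≥ 0)
    (hhemi : ∀ u ∈ M, ∀ w ∈ M, ∀ h : H,
      ContinuousOn (fun t : ℝ => ⟪F (u + t • (w - u)), h⟫) (Set.Icc 0 1))
    (f : H) (u : H) (hu : u ∈ M) :
    (∀ v ∈ M, ⟪F u - f, v - u⟫ ≥ 0) ↔ (∀ v ∈ M, ⟪F v - f, v - u⟫ ≥ 0) :=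
  stmt_2_general M hMc F hmono hhemi f u hu
end

section
/- Let F : D(F) → H be Fréchet differentiable on an open set D(F) containing a convex set M, and suppose there is τ > 0 such that ⟨F'(u)h, h⟩ ≥ τ‖F'(u)h‖² for all u ∈ M and all h ∈ H. Then F is cocoercive on M with constant τ: ⟨Fu - Fv, u - v⟩ ≥ τ‖Fu - Fv‖² for all u, v ∈ M. -/
open RealInnerProductSpace

theorem stmt_5 {H : Type*} [NormedAddCommGroup H] [InnerProductSpace ℝ H]
    (D : Set H) (hD : IsOpen D) (M : Set H) (hMD : M ⊆ D) (hMc : Convex ℝ M)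
    (F : H → H) (F' : H → H →L[ℝ] H)
    (hdiff : ∀ u ∈ D, HasFDerivAt F (F' u) u)
    (τ : ℝ) (hτ : 0 < τ)
    (hcoco' : ∀ u ∈ M, ∀ h : H, ⟪F' u h, h⟫ ≥ τ * ‖F' u h‖ ^ 2) :
    ∀ u ∈ M, ∀ v ∈ M, ⟪F u - F v, u - v⟫ ≥ τ * ‖F u - F v‖ ^ 2 := by
  intro u hu v hv
  set G : H → H := fun x => x - (2 * τ) • F x with hG
  set G' : H → H →L[ℝ] H := fun x =>
    ContinuousLinearMap.id ℝ H - (2 * τ) • F' x with hG'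
  have hGdiff : ∀ x ∈ M, HasFDerivWithinAt G (G' x) M x := by
    intro x hx
    exact ((hasFDerivAt_id x).sub (((hdiff x (hMD hx)).const_smul (2 * τ)))).hasFDerivWithinAt
  have hbound : ∀ x ∈ M, ‖G' x‖ ≤ 1 := by
    intro x hx
    refine ContinuousLinearMap.opNorm_le_bound _ zero_le_one ?_
    intro h
    rw [one_mul]
    have hsq : ‖G' x h‖ ^ 2 ≤ ‖h‖ ^ 2 := by
      have hexp : G' x h = h - (2 * τ) • F' x h := by simp [hG']
      rw [hexp, norm_sub_sq_real]
      have h1 : ⟪h, (2 * τ) • F' x h⟫ = (2 * τ) * ⟪F' x h, h⟫ := by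
        rw [real_inner_smul_right, real_inner_comm]
      have h2 : ‖(2 * τ) • F' x h‖ ^ 2 = (2 * τ) ^ 2 * ‖F' x h‖ ^ 2 := by
        rw [norm_smul, Real.norm_eq_abs, abs_of_pos (by positivity)]; ring
      rw [h1, h2]
      have h3 := hcoco' x hx h
      nlinarith [norm_nonneg (F' x h), sq_nonneg ‖F' x h‖]
    nlinarith [norm_nonneg (G' x h), norm_nonneg h]
  have hmvt : ‖G u - G v‖ ≤ 1 * ‖u - v‖ :=
    hMc.norm_image_sub_le_of_norm_hasFDerivWithin_le hGdiff hbound hv hu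
  rw [one_mul] at hmvt
  have hGuv : G u - G v = (u - v) - (2 * τ) • (F u - F v) := by
    simp [hG, smul_sub]; abel
  have hsq : ‖(u - v) - (2 * τ) • (F u - F v)‖ ^ 2 ≤ ‖u - v‖ ^ 2 := by
    rw [← hGuv]
    exact pow_le_pow_left₀ (norm_nonneg _) hmvt 2
  rw [norm_sub_sq_real] at hsq
  have h1 : ⟪u - v, (2 * τ) • (F u - F v)⟫ = (2 * τ) * ⟪F u - F v, u - v⟫ := by
    rw [real_inner_smul_right, real_inner_comm]
  have h2 : ‖(2 * τ) • (F u - F v)‖ ^ 2 = (2 * τ) ^ 2 * ‖F u - F v‖ ^ 2 := by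
    rw [norm_smul, Real.norm_eq_abs, abs_of_pos (by positivity)]; ring
  rw [h1, h2] at hsq
  nlinarith [sq_nonneg ‖F u - F v‖]
end

section
/- Assume F is monotone and cocoercive with constant τ > 0 on a closed convex set M, Fréchet differentiable with F' Lipschitz with constant L on M, and that u⋆ ∈ M satisfies F u⋆ = f and the adjoint source condition u⋆ = F'(u⋆)* z for some z ∈ H with ρ = ‖z‖ and ρL < 2. Let u_α ∈ M solve ⟨F u_α + α u_α - f, v - u_α⟩ ≥ 0 for all v ∈ M. Then τ‖F u_α - f‖ ≤ ρα. -/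
/-!
Put `w = uα - u⋆` and `e = F uα - f`. Testing the variational inequality with `v = u⋆` and using
cocoercivity gives `τ ‖e‖² ≤ ⟪e, w⟫ ≤ -α (⟪u⋆, w⟫ + ‖w‖²)`. The source condition turns `⟪u⋆, w⟫`
into `⟪z, F'(u⋆) w⟫`, and the second-order Taylor bound `‖F'(u⋆) w‖ ≤ ‖e‖ + L/2 ‖w‖²` yields
`τ ‖e‖² ≤ ρ α ‖e‖ - α (1 - ρ L / 2) ‖w‖² ≤ ρ α ‖e‖`, since `ρ L < 2`.
-/

open RealInnerProductSpace Set

section Taylor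

variable {E G : Type*} [NormedAddCommGroup E] [NormedSpace ℝ E]
  [NormedAddCommGroup G] [NormedSpace ℝ G]
  {s : Set E} {F : E → G} {F' : E → E →L[ℝ] G} {L : ℝ}

/-- Along the segment `t ↦ a + t • (b - a)` the remainder has derivative of norm at most
`L t ‖b - a‖²`, which integrates to the factor `1 / 2`. -/
theorem Convex.norm_sub_sub_fderiv_le_of_lipschitzOn (hs : Convex ℝ s)
    (hdiff : ∀ u ∈ s, HasFDerivAt F (F' u) u)
    (hLip : ∀ u ∈ s, ∀ v ∈ s, ‖F' u - F' v‖ ≤ L * ‖u - v‖)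
    {a b : E} (ha : a ∈ s) (hb : b ∈ s) :
    ‖F b - F a - F' a (b - a)‖ ≤ L / 2 * ‖b - a‖ ^ 2 := by
  set d := b - a
  set g : ℝ → G := fun t => F (a + t • d) - F a - t • F' a d
  have hseg : ∀ t ∈ Icc (0 : ℝ) 1, a + t • d ∈ s := fun t ht => hs.add_smul_sub_mem ha hb ht
  have hg : ∀ t ∈ Icc (0 : ℝ) 1, HasDerivAt g (F' (a + t • d) d - F' a d) t := by
    intro t ht
    have hline : HasDerivAt (fun t : ℝ => a + t • d) d t := by
      simpa using ((hasDerivAt_id t).smul_const d).const_add a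
    exact (((hdiff _ (hseg t ht)).comp_hasDerivAt t hline).sub_const (F a)).sub
      (by simpa using (hasDerivAt_id t).smul_const (F' a d))
  have hB : ∀ t : ℝ, HasDerivAt (fun t : ℝ => L * ‖d‖ ^ 2 * t ^ 2 / 2) (L * ‖d‖ ^ 2 * t) t :=
    fun t => (((hasDerivAt_pow 2 t).const_mul (L * ‖d‖ ^ 2)).div_const 2).congr_deriv (by ring)
  have hbound : ∀ t ∈ Ico (0 : ℝ) 1, ‖F' (a + t • d) d - F' a d‖ ≤ L * ‖d‖ ^ 2 * t := by
    intro t ht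
    have hLt : ‖F' (a + t • d) - F' a‖ ≤ L * (t * ‖d‖) := by
      simpa [norm_smul, abs_of_nonneg ht.1] using hLip _ (hseg t (Ico_subset_Icc_self ht)) a ha
    calc ‖F' (a + t • d) d - F' a d‖ = ‖(F' (a + t • d) - F' a) d‖ := rfl
      _ ≤ ‖F' (a + t • d) - F' a‖ * ‖d‖ := (F' (a + t • d) - F' a).le_opNorm d
      _ ≤ L * (t * ‖d‖) * ‖d‖ := mul_le_mul_of_nonneg_right hLt (norm_nonneg d)
      _ = L * ‖d‖ ^ 2 * t := by ring
  have h1 := image_norm_le_of_norm_deriv_right_le_deriv_boundary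
    (fun t ht => (hg t ht).continuousAt.continuousWithinAt)
    (fun t ht => (hg t (Ico_subset_Icc_self ht)).hasDerivWithinAt)
    (by simp [g]) hB hbound (right_mem_Icc.2 zero_le_one)
  calc ‖F b - F a - F' a (b - a)‖ = ‖g 1‖ := by simp [g, d]
    _ ≤ L * ‖d‖ ^ 2 * 1 ^ 2 / 2 := h1
    _ = L / 2 * ‖b - a‖ ^ 2 := by ring

theorem Convex.norm_fderiv_le_of_lipschitzOn (hs : Convex ℝ s)
    (hdiff : ∀ u ∈ s, HasFDerivAt F (F' u) u)
    (hLip : ∀ u ∈ s, ∀ v ∈ s, ‖F' u - F' v‖ ≤ L * ‖u - v‖)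
    {a b : E} (ha : a ∈ s) (hb : b ∈ s) :
    ‖F' a (b - a)‖ ≤ ‖F b - F a‖ + L / 2 * ‖b - a‖ ^ 2 := by
  have h := hs.norm_sub_sub_fderiv_le_of_lipschitzOn hdiff hLip ha hb
  calc ‖F' a (b - a)‖ = ‖(F b - F a) - (F b - F a - F' a (b - a))‖ := by rw [sub_sub_cancel]
    _ ≤ ‖F b - F a‖ + ‖F b - F a - F' a (b - a)‖ := norm_sub_le _ _
    _ ≤ ‖F b - F a‖ + L / 2 * ‖b - a‖ ^ 2 := by gcongr

end Taylor

theorem mul_le_of_mul_sq_le_mul {τ c x : ℝ} (hc : 0 ≤ c) (hx : 0 ≤ x)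
    (h : τ * x ^ 2 ≤ c * x) : τ * x ≤ c := by
  rcases hx.eq_or_lt with rfl | hx
  · simpa using hc
  · exact le_of_mul_le_mul_right (by nlinarith) hx

theorem stmt_10_general {H : Type*} [NormedAddCommGroup H] [InnerProductSpace ℝ H]
    [CompleteSpace H]
    (D : Set H) (M : Set H) (hMD : M ⊆ D)
    (hMc : Convex ℝ M)
    (F : H → H) (F' : H → H →L[ℝ] H)
    (hdiff : ∀ u ∈ D, HasFDerivAt F (F' u) u)
    (τ : ℝ)
    (hcoco : ∀ u ∈ M, ∀ v ∈ M, ⟪F u - F v, u - v⟫ ≥ τ * ‖F u - F v‖ ^ 2)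
    (L : ℝ)
    (hLip : ∀ u ∈ M, ∀ v ∈ M, ‖F' u - F' v‖ ≤ L * ‖u - v‖)
    (ustar : H) (hustar : ustar ∈ M) (f : H) (hsol : F ustar = f)
    (z : H) (hsource : ustar = ContinuousLinearMap.adjoint (F' ustar) z)
    (ρ : ℝ) (hρ : ρ = ‖z‖) (hρL : ρ * L < 2)
    (α : ℝ) (hα : 0 < α)
    (uα : H) (huα : uα ∈ M)
    (hVI : ∀ v ∈ M, ⟪F uα + α • uα - f, v - uα⟫ ≥ 0) :
    τ * ‖F uα - f‖ ≤ ρ * α := by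
  set e := F uα - f
  set w := uα - ustar
  have hρ0 : 0 ≤ ρ := hρ ▸ norm_nonneg z
  have hcoco' : τ * ‖e‖ ^ 2 ≤ ⟪e, w⟫ := by simpa only [hsol] using hcoco uα huα ustar hustar
  have hVI' : ⟪e, w⟫ + α * (⟪ustar, w⟫ + ‖w‖ ^ 2) ≤ 0 := by
    have h := hVI ustar hustar
    have hu : ⟪uα, w⟫ = ⟪ustar, w⟫ + ‖w‖ ^ 2 := by
      rw [← real_inner_self_eq_norm_sq, ← inner_add_left, add_sub_cancel]
    rw [← neg_sub uα ustar, add_sub_right_comm] at h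
    rw [inner_neg_right, inner_add_left, real_inner_smul_left, hu] at h
    linarith
  have hsource' : -(ρ * (‖e‖ + L / 2 * ‖w‖ ^ 2)) ≤ ⟪ustar, w⟫ := by
    have htaylor := hMc.norm_fderiv_le_of_lipschitzOn (fun u hu => hdiff u (hMD hu)) hLip
      hustar huα
    rw [hsol] at htaylor
    calc -(ρ * (‖e‖ + L / 2 * ‖w‖ ^ 2)) ≤ -(‖z‖ * ‖F' ustar w‖) := by
          rw [hρ]; exact neg_le_neg (mul_le_mul_of_nonneg_left htaylor (norm_nonneg z))
      _ ≤ ⟪z, F' ustar w⟫ := neg_le_of_abs_le (abs_real_inner_le_norm _ _)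
      _ = ⟪ustar, w⟫ := by
          conv_rhs => rw [hsource]
          exact (ContinuousLinearMap.adjoint_inner_left _ _ _).symm
  have hkey : τ * ‖e‖ ^ 2 ≤ ρ * α * ‖e‖ := by
    nlinarith [mul_le_mul_of_nonneg_left hsource' hα.le,
      mul_nonneg (mul_nonneg hα.le (sub_nonneg.2 hρL.le)) (sq_nonneg ‖w‖)]
  exact mul_le_of_mul_sq_le_mul (mul_nonneg hρ0 hα.le) (norm_nonneg e) hkey

theorem stmt_10 {H : Type*} [NormedAddCommGroup H] [InnerProductSpace ℝ H]
    [CompleteSpace H]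
    (D : Set H) (hD : IsOpen D) (M : Set H) (hMD : M ⊆ D)
    (hM : IsClosed M) (hMc : Convex ℝ M)
    (F : H → H) (F' : H → H →L[ℝ] H)
    (hdiff : ∀ u ∈ D, HasFDerivAt F (F' u) u)
    (τ : ℝ) (hτ : 0 < τ)
    (hmono : ∀ u ∈ M, ∀ v ∈ M, ⟪F u - F v, u - v⟫ ≥ 0)
    (hcoco : ∀ u ∈ M, ∀ v ∈ M, ⟪F u - F v, u - v⟫ ≥ τ * ‖F u - F v‖ ^ 2)
    (L : ℝ) (hL : 0 ≤ L)
    (hLip : ∀ u ∈ M, ∀ v ∈ M, ‖F' u - F' v‖ ≤ L * ‖u - v‖)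
    (ustar : H) (hustar : ustar ∈ M) (f : H) (hsol : F ustar = f)
    (z : H) (hsource : ustar = ContinuousLinearMap.adjoint (F' ustar) z)
    (ρ : ℝ) (hρ : ρ = ‖z‖) (hρL : ρ * L < 2)
    (α : ℝ) (hα : 0 < α)
    (uα : H) (huα : uα ∈ M)
    (hVI : ∀ v ∈ M, ⟪F uα + α • uα - f, v - uα⟫ ≥ 0) :
    τ * ‖F uα - f‖ ≤ ρ * α :=
  stmt_10_general D M hMD hMc F F' hdiff τ hcoco L hLip ustar hustar f hsol z hsource ρ hρ hρL α hα
    uα huα hVI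
end

section
/- Let F : L²(0,1) → L²(0,1) be defined by (Fu)(t) = -c₀ exp(-∫₀ᵗ u(s) ds) with c₀ > 0. Then F is monotone on the set M₀ = {u ∈ L²(0,1) : u ≥ 0 a.e.}, i.e., ⟨Fu - Fv, u - v⟩_{L²} ≥ 0 for all u, v ∈ M₀. -/
open RealInnerProductSpace MeasureTheory Real Set Filter

/-!
Write `U`, `V` for the primitives of `u`, `v` and let
`D x y = exp (-x) - exp (-y) + exp (-y) * (x - y)` be the Bregman divergence of the convex
function `x ↦ exp (-x)`, so `D ≥ 0`. For `Ψ = D ∘ (U, V)` one has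
`Ψ' + v Ψ = (exp (-V) - exp (-U)) * (u - v)` almost everywhere, and `Ψ` is absolutely
continuous with `Ψ 0 = 0`. Integrating gives
`∫₀¹ (exp (-V) - exp (-U)) * (u - v) = Ψ 1 + ∫₀¹ v Ψ ≥ 0`.
-/

theorem LocallyLipschitz.comp_absolutelyContinuousOnInterval {E Y : Type*}
    [SeminormedAddCommGroup E] [PseudoMetricSpace Y] {φ : E → Y} {f : ℝ → E} {a b : ℝ}
    (hφ : LocallyLipschitz φ) (hf : AbsolutelyContinuousOnInterval f a b) :
    AbsolutelyContinuousOnInterval (φ ∘ f) a b := by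
  obtain ⟨K, hK⟩ := LocallyLipschitzOn.exists_lipschitzOnWith_of_compact
    (isCompact_uIcc.image_of_continuousOn hf.continuousOn) hφ.locallyLipschitzOn
  unfold AbsolutelyContinuousOnInterval at hf ⊢
  apply squeeze_zero' ?_ ?_ (by simpa using hf.const_mul (K : ℝ))
  · exact Eventually.of_forall fun _ ↦ Finset.sum_nonneg fun i _ ↦ dist_nonneg
  rw [eventually_inf_principal]
  filter_upwards with I hI
  rw [Finset.mul_sum]
  gcongr with i hi
  exact hK.dist_le_mul _ (mem_image_of_mem f (hI.1 i hi).1) _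
    (mem_image_of_mem f (hI.1 i hi).2)

noncomputable def expNegBregman (x y : ℝ) : ℝ := exp (-x) - exp (-y) + exp (-y) * (x - y)

theorem expNegBregman_nonneg (x y : ℝ) : 0 ≤ expNegBregman x y := by
  have hsplit : exp (-x) = exp (-y) * exp (-(x - y)) := by rw [← exp_add]; ring_nf
  have := mul_le_mul_of_nonneg_left (add_one_le_exp (-(x - y))) (exp_pos (-y)).le
  rw [expNegBregman, hsplit]
  linarith

theorem expNegBregman_self (x : ℝ) : expNegBregman x x = 0 := by
  simp [expNegBregman]

theorem hasDerivAt_expNegBregman {U V : ℝ → ℝ} {f g t : ℝ} (hU : HasDerivAt U f t)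
    (hV : HasDerivAt V g t) :
    HasDerivAt (fun s ↦ expNegBregman (U s) (V s))
      ((exp (-V t) - exp (-U t)) * (f - g) - g * expNegBregman (U t) (V t)) t := by
  have h := (hU.fun_neg.exp.fun_sub hV.fun_neg.exp).fun_add
    (hV.fun_neg.exp.fun_mul (hU.fun_sub hV))
  exact h.congr_deriv (by simp only [expNegBregman]; ring)

theorem AbsolutelyContinuousOnInterval.expNegBregman {U V : ℝ → ℝ} {a b : ℝ}
    (hU : AbsolutelyContinuousOnInterval U a b) (hV : AbsolutelyContinuousOnInterval V a b) :
    AbsolutelyContinuousOnInterval (fun t ↦ expNegBregman (U t) (V t)) a b := by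
  have hexp : LocallyLipschitz fun x : ℝ ↦ exp (-x) :=
    (contDiff_exp.comp contDiff_neg).locallyLipschitz
  have hU' := hexp.comp_absolutelyContinuousOnInterval hU
  have hV' := hexp.comp_absolutelyContinuousOnInterval hV
  exact (hU'.fun_sub hV').fun_add (hV'.fun_mul (hU.fun_sub hV))

theorem integral_exp_neg_primitive_sub_mul_sub_nonneg {f g : ℝ → ℝ} {a b : ℝ}
    (hab : a ≤ b) (hf : IntervalIntegrable f volume a b) (hg : IntervalIntegrable g volume a b)
    (hg0 : ∀ᵐ t ∂volume.restrict (Ioc a b), 0 ≤ g t) :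
    0 ≤ ∫ t in a..b, (exp (-∫ s in a..t, g s) - exp (-∫ s in a..t, f s)) * (f t - g t) := by
  set U := fun t ↦ ∫ s in a..t, f s
  set V := fun t ↦ ∫ s in a..t, g s
  set Ψ := fun t ↦ expNegBregman (U t) (V t)
  have hΨ : AbsolutelyContinuousOnInterval Ψ a b :=
    (hf.absolutelyContinuousOnInterval_intervalIntegral left_mem_uIcc).expNegBregman
      (hg.absolutelyContinuousOnInterval_intervalIntegral left_mem_uIcc)
  have hgΨ : IntervalIntegrable (fun t ↦ g t * Ψ t) volume a b :=
    hg.mul_continuousOn hΨ.continuousOn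
  have hderiv : ∀ᵐ t, t ∈ uIoc a b →
      deriv Ψ t + g t * Ψ t = (exp (-V t) - exp (-U t)) * (f t - g t) := by
    filter_upwards [hf.ae_hasDerivAt_integral, hg.ae_hasDerivAt_integral] with t hft hgt ht
    have ht' := uIoc_subset_uIcc ht
    rw [(hasDerivAt_expNegBregman (hft ht' a left_mem_uIcc) (hgt ht' a left_mem_uIcc)).deriv]
    ring
  have hΨa : Ψ a = 0 := by simp [Ψ, U, V, expNegBregman_self]
  have hgΨ0 : 0 ≤ ∫ t in a..b, g t * Ψ t := by
    rw [intervalIntegral.integral_of_le hab]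
    exact integral_nonneg_of_ae (hg0.mono fun t ht ↦ mul_nonneg ht (expNegBregman_nonneg _ _))
  calc 0 ≤ Ψ b - Ψ a + ∫ t in a..b, g t * Ψ t := by
        rw [hΨa]; linarith [expNegBregman_nonneg (U b) (V b)]
    _ = ∫ t in a..b, deriv Ψ t + g t * Ψ t := by
        rw [intervalIntegral.integral_add hΨ.intervalIntegrable_deriv hgΨ,
          hΨ.integral_deriv_eq_sub]
    _ = _ := intervalIntegral.integral_congr_ae hderiv

theorem stmt_13
    (μ : Measure ℝ) (hμ : μ = volume.restrict (Set.Ioc (0:ℝ) 1))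
    (c₀ : ℝ) (hc₀ : 0 < c₀)
    (F : Lp ℝ 2 μ → Lp ℝ 2 μ)
    (hF : ∀ u : Lp ℝ 2 μ,
      (F u : ℝ → ℝ) =ᵐ[μ]
        fun t => -c₀ * Real.exp (-(∫ s in Set.Ioc (0:ℝ) t, u s))) :
    ∀ u : Lp ℝ 2 μ, (∀ᵐ t ∂μ, 0 ≤ u t) →
      ∀ v : Lp ℝ 2 μ, (∀ᵐ t ∂μ, 0 ≤ v t) →
        ⟪F u - F v, u - v⟫ ≥ 0 := by
  subst hμ
  intro u _ v hv
  have hint (w : Lp ℝ 2 (volume.restrict (Ioc (0:ℝ) 1))) : IntervalIntegrable w volume 0 1 :=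
    (intervalIntegrable_iff_integrableOn_Ioc_of_le zero_le_one).2
      ((Lp.memLp w).integrable one_le_two)
  have hprim (w : ℝ → ℝ) {t : ℝ} (ht : t ∈ Ioc (0:ℝ) 1) :
      ∫ s in Ioc 0 t, w s = ∫ s in 0..t, w s :=
    (intervalIntegral.integral_of_le ht.1.le).symm
  calc ⟪F u - F v, u - v⟫
      = ∫ t in Ioc 0 1,
          c₀ * ((exp (-∫ s in 0..t, v s) - exp (-∫ s in 0..t, u s)) * (u t - v t)) := by
        rw [L2.inner_def]
        refine integral_congr_ae ?_
        filter_upwards [hF u, hF v, Lp.coeFn_sub (F u) (F v), Lp.coeFn_sub u v,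
          ae_restrict_mem measurableSet_Ioc] with t hu' hv' hFuv huv ht
        rw [Real.inner_apply, hFuv, huv, Pi.sub_apply, Pi.sub_apply, hu', hv', hprim _ ht,
          hprim _ ht]
        ring
    _ = c₀ * ∫ t in 0..1,
          (exp (-∫ s in 0..t, v s) - exp (-∫ s in 0..t, u s)) * (u t - v t) := by
        rw [integral_const_mul, intervalIntegral.integral_of_le zero_le_one]
    _ ≥ 0 := mul_nonneg hc₀.le
        (integral_exp_neg_primitive_sub_mul_sub_nonneg zero_le_one (hint u) (hint v) hv)
end

section
/- For the operator F : L²(0,1) → L²(0,1), (Fu)(t) = -c₀ exp(-∫₀ᵗ u(s) ds), and any u ∈ L²(0,1) with u ≥ 0 a.e. and any h ∈ L²(0,1), the Fréchet derivative satisfies 2⟨F'(u)h, h⟩ ≥ ∫₀¹ g(t) u(t) H(t)² dt, where g = -Fu and H(t) = ∫₀ᵗ h(s) ds. -/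
/-!
Write `G`, `H` for the primitives of `u`, `h` from `0`. Primitives of integrable functions are
absolutely continuous, hence so is `e^{-G} H²`, with derivative `e^{-G} (2 H h - u H²)` almost
everywhere. Integrating over `[0, 1]`, `2 ⟪F'(u) h, h⟫ - ∫ g u H² = c₀ e^{-G(1)} H(1)² ≥ 0`.
-/

open RealInnerProductSpace MeasureTheory

open Set Real

namespace AbsolutelyContinuousOnInterval

variable {Y : Type*} [PseudoMetricSpace Y] {a b : ℝ}

theorem comp_lipschitzOnWith {X : Type*} [PseudoMetricSpace X] {f : ℝ → X} {g : X → Y}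
    {K : NNReal} {s : Set X} (hf : AbsolutelyContinuousOnInterval f a b)
    (hg : LipschitzOnWith K g s) (hfs : MapsTo f (uIcc a b) s) :
    AbsolutelyContinuousOnInterval (g ∘ f) a b := by
  rw [absolutelyContinuousOnInterval_iff] at hf ⊢
  intro ε hε
  obtain ⟨δ, hδ, hfδ⟩ := hf (ε / (K + 1)) (by positivity)
  refine ⟨δ, hδ, fun E hE hEδ => ?_⟩
  calc ∑ i ∈ Finset.range E.1, dist (g (f (E.2 i).1)) (g (f (E.2 i).2))
      ≤ ∑ i ∈ Finset.range E.1, K * dist (f (E.2 i).1) (f (E.2 i).2) :=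
        Finset.sum_le_sum fun i hi =>
          hg.dist_le_mul _ (hfs (hE.1 i hi).1) _ (hfs (hE.1 i hi).2)
    _ = K * ∑ i ∈ Finset.range E.1, dist (f (E.2 i).1) (f (E.2 i).2) :=
        (Finset.mul_sum ..).symm
    _ ≤ K * (ε / (K + 1)) := by gcongr; exact (hfδ E hE hEδ).le
    _ < (K + 1) * (ε / (K + 1)) := by gcongr; linarith
    _ = ε := by field_simp

theorem comp_locallyLipschitz {E : Type*} [SeminormedAddCommGroup E] {f : ℝ → E} {g : E → Y}
    (hf : AbsolutelyContinuousOnInterval f a b) (hg : LocallyLipschitz g) :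
    AbsolutelyContinuousOnInterval (g ∘ f) a b := by
  obtain ⟨K, hK⟩ := hg.locallyLipschitzOn.exists_lipschitzOnWith_of_compact
    (isCompact_uIcc.image_of_continuousOn hf.continuousOn)
  exact hf.comp_lipschitzOnWith hK (mapsTo_image f _)

end AbsolutelyContinuousOnInterval

section PrimitiveWeight

variable {u h : ℝ → ℝ} {a b : ℝ}

theorem ae_hasDerivAt_exp_neg_integral_mul_sq (hu : IntervalIntegrable u volume a b)
    (hh : IntervalIntegrable h volume a b) :
    ∀ᵐ x, x ∈ uIcc a b →
      HasDerivAt (fun x => exp (-∫ s in a..x, u s) * (∫ s in a..x, h s) ^ 2)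
        (exp (-∫ s in a..x, u s) *
          (2 * (∫ s in a..x, h s) * h x - u x * (∫ s in a..x, h s) ^ 2)) x := by
  filter_upwards [hu.ae_hasDerivAt_integral, hh.ae_hasDerivAt_integral] with x hux hhx hx
  have hE : HasDerivAt (fun x => exp (-∫ s in a..x, u s)) (exp (-∫ s in a..x, u s) * -u x) x :=
    (hux hx a left_mem_uIcc).neg.exp
  have hH : HasDerivAt (fun x => (∫ s in a..x, h s) ^ 2) (2 * (∫ s in a..x, h s) * h x) x := by
    simpa using (hhx hx a left_mem_uIcc).fun_pow 2
  exact (hE.fun_mul hH).congr_deriv (by ring)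

theorem integral_exp_neg_integral_mul_eq (hu : IntervalIntegrable u volume a b)
    (hh : IntervalIntegrable h volume a b) :
    ∫ x in a..b, exp (-∫ s in a..x, u s) *
        (2 * (∫ s in a..x, h s) * h x - u x * (∫ s in a..x, h s) ^ 2)
      = exp (-∫ s in a..b, u s) * (∫ s in a..b, h s) ^ 2 := by
  have hG := hu.absolutelyContinuousOnInterval_intervalIntegral left_mem_uIcc
  have hH := hh.absolutelyContinuousOnInterval_intervalIntegral left_mem_uIcc
  have hE : AbsolutelyContinuousOnInterval (fun x => exp (-∫ s in a..x, u s)) a b :=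
    hG.neg.comp_locallyLipschitz contDiff_exp.locallyLipschitz
  have hΦ := hE.fun_mul (hH.fun_mul hH)
  simp only [← sq] at hΦ
  have hFTC := hΦ.integral_deriv_eq_sub
  simp only [intervalIntegral.integral_same, zero_pow two_ne_zero, mul_zero, sub_zero] at hFTC
  rw [← hFTC]
  refine intervalIntegral.integral_congr_ae ?_
  filter_upwards [ae_hasDerivAt_exp_neg_integral_mul_sq hu hh] with x hx hxab
  exact (hx (uIoc_subset_uIcc hxab)).deriv.symm

theorem integral_exp_neg_integral_mul_sq_le (hu : IntervalIntegrable u volume a b)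
    (hh : IntervalIntegrable h volume a b) :
    ∫ x in a..b, exp (-∫ s in a..x, u s) * u x * (∫ s in a..x, h s) ^ 2
      ≤ 2 * ∫ x in a..b, exp (-∫ s in a..x, u s) * (∫ s in a..x, h s) * h x := by
  have hG := (hu.absolutelyContinuousOnInterval_intervalIntegral left_mem_uIcc).continuousOn
  have hH := (hh.absolutelyContinuousOnInterval_intervalIntegral left_mem_uIcc).continuousOn
  have hint₁ : IntervalIntegrable
      (fun x => exp (-∫ s in a..x, u s) * u x * (∫ s in a..x, h s) ^ 2) volume a b :=
    (hu.continuousOn_mul hG.neg.rexp).mul_continuousOn (hH.pow 2)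
  have hint₂ : IntervalIntegrable
      (fun x => exp (-∫ s in a..x, u s) * (∫ s in a..x, h s) * h x) volume a b :=
    hh.continuousOn_mul (hG.neg.rexp.mul hH)
  rw [← sub_nonneg, ← intervalIntegral.integral_const_mul,
    ← intervalIntegral.integral_sub (hint₂.const_mul 2) hint₁]
  calc (0:ℝ) ≤ exp (-∫ s in a..b, u s) * (∫ s in a..b, h s) ^ 2 := by positivity
    _ = _ := by
      rw [← integral_exp_neg_integral_mul_eq hu hh]
      congr 1
      ext x
      ring

end PrimitiveWeight

theorem stmt_16
    (μ : Measure ℝ) (hμ : μ = volume.restrict (Set.Ioc (0:ℝ) 1))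
    (c₀ : ℝ) (hc₀ : 0 < c₀)
    (F : Lp ℝ 2 μ → Lp ℝ 2 μ)
    (hF : ∀ u : Lp ℝ 2 μ,
      (F u : ℝ → ℝ) =ᵐ[μ]
        fun t => -c₀ * Real.exp (-(∫ s in Set.Ioc (0:ℝ) t, u s)))
    (F' : Lp ℝ 2 μ → (Lp ℝ 2 μ →L[ℝ] Lp ℝ 2 μ))
    (hF' : ∀ u h : Lp ℝ 2 μ,
      (F' u h : ℝ → ℝ) =ᵐ[μ]
        fun t => -(F u t) * (∫ s in Set.Ioc (0:ℝ) t, h s)) :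
    ∀ u : Lp ℝ 2 μ, (∀ᵐ t ∂μ, 0 ≤ u t) →
      ∀ h : Lp ℝ 2 μ,
        2 * ⟪F' u h, h⟫ ≥
          ∫ t in Set.Ioc (0:ℝ) 1,
            (-(F u t)) * u t * (∫ s in Set.Ioc (0:ℝ) t, h s) ^ 2 := by
  subst hμ
  intro u _ h
  have hint (v : Lp ℝ 2 (volume.restrict (Ioc (0:ℝ) 1))) : IntervalIntegrable v volume 0 1 :=
    (intervalIntegrable_iff_integrableOn_Ioc_of_le zero_le_one).2
      ((Lp.memLp v).integrable one_le_two)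
  have hprim (v : ℝ → ℝ) {t : ℝ} (ht : t ∈ Ioc (0:ℝ) 1) :
      ∫ s in Ioc 0 t, v s = ∫ s in (0:ℝ)..t, v s :=
    (intervalIntegral.integral_of_le ht.1.le).symm
  have hFu : ∀ᵐ t ∂volume.restrict (Ioc (0:ℝ) 1),
      -(F u t) = c₀ * exp (-∫ s in (0:ℝ)..t, u s) := by
    filter_upwards [hF u, ae_restrict_mem measurableSet_Ioc] with t ht ht01
    rw [ht, hprim _ ht01]
    ring
  have hlhs : ⟪F' u h, h⟫ =
      c₀ * ∫ t in (0:ℝ)..1, exp (-∫ s in (0:ℝ)..t, u s) * (∫ s in (0:ℝ)..t, h s) * h t := by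
    rw [L2.inner_def, intervalIntegral.integral_of_le zero_le_one, ← integral_const_mul]
    refine integral_congr_ae ?_
    filter_upwards [hF' u h, hFu, ae_restrict_mem measurableSet_Ioc] with t ht hFt ht01
    rw [ht, hFt, RCLike.inner_apply, conj_trivial, hprim _ ht01]
    ring
  have hrhs : ∫ t in Ioc (0:ℝ) 1, (-(F u t)) * u t * (∫ s in Ioc (0:ℝ) t, h s) ^ 2 =
      c₀ * ∫ t in (0:ℝ)..1, exp (-∫ s in (0:ℝ)..t, u s) * u t * (∫ s in (0:ℝ)..t, h s) ^ 2 := by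
    rw [intervalIntegral.integral_of_le zero_le_one, ← integral_const_mul]
    refine integral_congr_ae ?_
    filter_upwards [hFu, ae_restrict_mem measurableSet_Ioc] with t hFt ht01
    rw [hFt, hprim _ ht01]
    ring
  rw [ge_iff_le, hlhs, hrhs, ← mul_assoc, mul_comm 2 c₀, mul_assoc]
  exact mul_le_mul_of_nonneg_left (integral_exp_neg_integral_mul_sq_le (hint u) (hint h)) hc₀.le
end

section
/- Let F be monotone on closed convex M, let u_α ∈ M solve ⟨F u_α + α u_α - f, v - u_α⟩ ≥ 0 for all v ∈ M, and let u⋆ ∈ M be any solution of the variational inequality ⟨F u⋆ - f, v - u⋆⟩ ≥ 0 for all v ∈ M. Then ‖u_α‖² ≤ ⟨u⋆, u_α⟩; consequently ‖u_α‖ ≤ ‖u⋆‖ and ‖u_α - u⋆‖² ≤ ‖u⋆‖² - ‖u_α‖². -/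
open RealInnerProductSpace

theorem stmt_17 {H : Type*} [NormedAddCommGroup H] [InnerProductSpace ℝ H]
    (M : Set H) (hM : IsClosed M) (hMc : Convex ℝ M)
    (F : H → H)
    (hmono : ∀ u ∈ M, ∀ v ∈ M, ⟪F u - F v, u - v⟫ ≥ 0)
    (f : H) (α : ℝ) (hα : 0 < α)
    (uα : H) (huα : uα ∈ M)
    (hVI : ∀ v ∈ M, ⟪F uα + α • uα - f, v - uα⟫ ≥ 0)
    (ustar : H) (hustar : ustar ∈ M)
    (hVIstar : ∀ v ∈ M, ⟪F ustar - f, v - ustar⟫ ≥ 0) :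
    ‖uα‖ ^ 2 ≤ ⟪ustar, uα⟫ ∧ ‖uα‖ ≤ ‖ustar‖ ∧
      ‖uα - ustar‖ ^ 2 ≤ ‖ustar‖ ^ 2 - ‖uα‖ ^ 2 := by
  have h1 := hVI ustar hustar
  have h2 := hVIstar uα huα
  have h3 := hmono uα huα ustar hustar
  have hkey : ⟪uα, ustar - uα⟫ ≥ 0 := by
    have hsum : ⟪F uα - F ustar, ustar - uα⟫ + α * ⟪uα, ustar - uα⟫ ≥ 0 := by
      have e1 : ⟪F uα + α • uα - f, ustar - uα⟫
          = ⟪F uα - f, ustar - uα⟫ + α * ⟪uα, ustar - uα⟫ := by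
        rw [show F uα + α • uα - f = (F uα - f) + α • uα by abel,
          inner_add_left, real_inner_smul_left]
      have e2 : ⟪F ustar - f, uα - ustar⟫ = -⟪F ustar - f, ustar - uα⟫ := by
        rw [← inner_neg_right]; congr 1; abel
      have e3 : ⟪F uα - F ustar, ustar - uα⟫
          = ⟪F uα - f, ustar - uα⟫ - ⟪F ustar - f, ustar - uα⟫ := by
        rw [← inner_sub_left]; congr 1; abel
      rw [e1] at h1
      rw [e2] at h2
      rw [e3]
      linarith
    have hmono' : ⟪F uα - F ustar, ustar - uα⟫ ≤ 0 := by
      have : ⟪F uα - F ustar, ustar - uα⟫ = -⟪F uα - F ustar, uα - ustar⟫ := by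
        rw [← inner_neg_right]; congr 1; abel
      rw [this]; linarith
    nlinarith
  have hfirst : ‖uα‖ ^ 2 ≤ ⟪ustar, uα⟫ := by
    rw [inner_sub_right] at hkey
    rw [← real_inner_self_eq_norm_sq]
    have := real_inner_comm uα ustar
    linarith
  refine ⟨hfirst, ?_, ?_⟩
  · by_contra hlt
    push_neg at hlt
    have hc : ⟪ustar, uα⟫ ≤ ‖ustar‖ * ‖uα‖ := real_inner_le_norm _ _
    nlinarith [norm_nonneg uα, norm_nonneg ustar]
  · have : ‖uα - ustar‖ ^ 2 = ‖uα‖ ^ 2 - 2 * ⟪uα, ustar⟫ + ‖ustar‖ ^ 2 := by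
      rw [norm_sub_sq_real]
    have hc := real_inner_comm uα ustar
    rw [this]
    linarith
end

section
/- Let F be monotone on closed convex M and, for each α > 0, let u_α ∈ M solve ⟨F u_α + α u_α - f, v - u_α⟩ ≥ 0 for all v ∈ M. Then for 0 < β ≤ α one has ‖u_α‖² ≤ ⟨u_β, u_α⟩, hence ‖u_α - u_β‖² ≤ ‖u_β‖² - ‖u_α‖² and the map α ↦ ‖u_α‖ is non-increasing. -/
open RealInnerProductSpace

theorem stmt_18 {H : Type*} [NormedAddCommGroup H] [InnerProductSpace ℝ H]
    (M : Set H) (hM : IsClosed M) (hMc : Convex ℝ M)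
    (F : H → H)
    (hmono : ∀ u ∈ M, ∀ v ∈ M, ⟪F u - F v, u - v⟫ ≥ 0)
    (f : H) (u : ℝ → H)
    (hu : ∀ α > (0:ℝ), u α ∈ M ∧ ∀ v ∈ M, ⟪F (u α) + α • u α - f, v - u α⟫ ≥ 0) :
    ∀ α β : ℝ, 0 < β → β ≤ α →
      ‖u α‖ ^ 2 ≤ ⟪u β, u α⟫ ∧
      ‖u α - u β‖ ^ 2 ≤ ‖u β‖ ^ 2 - ‖u α‖ ^ 2 ∧
      ‖u α‖ ≤ ‖u β‖ := by
  intro α β hβ hβα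
  have hα : (0:ℝ) < α := lt_of_lt_of_le hβ hβα
  obtain ⟨hαM, hαV⟩ := hu α hα
  obtain ⟨hβM, hβV⟩ := hu β hβ
  have h1 := hαV (u β) hβM
  have h2 := hβV (u α) hαM
  have hm := hmono (u α) hαM (u β) hβM
  simp only [inner_add_left, inner_sub_left, inner_sub_right, real_inner_smul_left,
    real_inner_self_eq_norm_sq] at h1 h2 hm
  have hcomm : ⟪u β, u α⟫ = ⟪u α, u β⟫ := real_inner_comm _ _
  have hcs : ⟪u α, u β⟫ ≤ ‖u α‖ * ‖u β‖ := real_inner_le_norm _ _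
  have hna : (0:ℝ) ≤ ‖u α‖ := norm_nonneg _
  have hnb : (0:ℝ) ≤ ‖u β‖ := norm_nonneg _
  rw [hcomm] at h2
  have hsum : α * (⟪u α, u β⟫ - ‖u α‖ ^ 2) + β * (⟪u α, u β⟫ - ‖u β‖ ^ 2) ≥ 0 := by
    nlinarith [h1, h2, hm]
  have key : ‖u α‖ ^ 2 ≤ ⟪u β, u α⟫ := by
    rw [hcomm]
    set c := ⟪u α, u β⟫ with hc
    set na := ‖u α‖ with hnadef
    set nb := ‖u β‖ with hnbdef
    by_contra hcon
    push_neg at hcon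
    have h3 : β * (2 * c - na ^ 2 - nb ^ 2) ≥ (α - β) * (na ^ 2 - c) := by nlinarith
    have h4 : (α - β) * (na ^ 2 - c) ≥ 0 :=
      mul_nonneg (by linarith) (by linarith)
    have h5 : 2 * c - na ^ 2 - nb ^ 2 ≤ 0 := by nlinarith [sq_nonneg (na - nb)]
    have h6 : β * (2 * c - na ^ 2 - nb ^ 2) ≤ 0 := mul_nonpos_of_nonneg_of_nonpos hβ.le h5
    have h7 : 2 * c - na ^ 2 - nb ^ 2 = 0 := by nlinarith
    nlinarith [sq_nonneg (na - nb)]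
  refine ⟨key, ?_, ?_⟩
  · have hns : ‖u α - u β‖ ^ 2 = ‖u α‖ ^ 2 - 2 * ⟪u α, u β⟫ + ‖u β‖ ^ 2 :=
      norm_sub_sq_real _ _
    rw [hcomm] at key
    linarith
  · rw [hcomm] at key
    nlinarith
end

section
/- Assume F is monotone and hemicontinuous on closed convex M, the solution set S of the variational inequality ⟨Fu - f, v - u⟩ ≥ 0 (for all v ∈ M) is nonempty, and for each α > 0 the element u_α ∈ M solves ⟨F u_α + α u_α - f, v - u_α⟩ ≥ 0 for all v ∈ M. If additionally u_α(δ)^δ ∈ M solves the same inequality with f replaced by f^δ, ‖f - f^δ‖ ≤ δ, and α(δ) → 0 with δ/α(δ) → 0 as δ → 0, then u_{α(δ)}^δ converges strongly to the minimum-norm element u⋆⋆ of S as δ → 0. -/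
open RealInnerProductSpace Filter

theorem stmt_19 {H : Type*} [NormedAddCommGroup H] [InnerProductSpace ℝ H]
    [CompleteSpace H] [TopologicalSpace.SeparableSpace H]
    (M : Set H) (hM : IsClosed M) (hMc : Convex ℝ M)
    (F : H → H)
    (hmono : ∀ u ∈ M, ∀ v ∈ M, ⟪F u - F v, u - v⟫ ≥ 0)
    (hdemi : ∀ (x : H) (s : ℕ → H), Tendsto s atTop (nhds x) →
      ∀ h : H, Tendsto (fun n => ⟪F (s n), h⟫) atTop (nhds ⟪F x, h⟫))
    (hbdd : ∀ N : Set H, Bornology.IsBounded N → Bornology.IsBounded (F '' N))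
    (hhemi : ∀ u ∈ M, ∀ w ∈ M, ∀ h : H,
      ContinuousOn (fun t : ℝ => ⟪F (u + t • (w - u)), h⟫) (Set.Icc 0 1))
    (f : H)
    (S : Set H) (hS : S = {u | u ∈ M ∧ ∀ v ∈ M, ⟪F u - f, v - u⟫ ≥ 0})
    (hSne : S.Nonempty)
    (ustst : H) (hmin : ustst ∈ S ∧ ∀ w ∈ S, ‖ustst‖ ≤ ‖w‖)
    (uα : ℝ → H)
    (huα : ∀ α > (0:ℝ), uα α ∈ M ∧
      ∀ v ∈ M, ⟪F (uα α) + α • uα α - f, v - uα α⟫ ≥ 0)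
    (α : ℝ → ℝ) (hαpos : ∀ δ > (0:ℝ), 0 < α δ)
    (hα0 : Tendsto α (nhdsWithin 0 (Set.Ioi 0)) (nhds 0))
    (hδα : Tendsto (fun δ => δ / α δ) (nhdsWithin 0 (Set.Ioi 0)) (nhds 0))
    (fδ : ℝ → H) (hnoise : ∀ δ > (0:ℝ), ‖f - fδ δ‖ ≤ δ)
    (uδ : ℝ → H)
    (huδ : ∀ δ > (0:ℝ), uδ δ ∈ M ∧
      ∀ v ∈ M, ⟪F (uδ δ) + (α δ) • uδ δ - fδ δ, v - uδ δ⟫ ≥ 0) :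
    Tendsto uδ (nhdsWithin 0 (Set.Ioi 0)) (nhds ustst) := by
  -- basic facts about ustst
  have hust : ustst ∈ M ∧ ∀ v ∈ M, ⟪F ustst - f, v - ustst⟫ ≥ 0 := by
    have := hmin.1; rw [hS] at this; exact this
  obtain ⟨hustM, hustVI⟩ := hust
  -- Step A : ⟪uα t, ustst - uα t⟫ ≥ 0 for t > 0
  have hA : ∀ t > (0:ℝ), ⟪uα t, ustst - uα t⟫ ≥ 0 := by
    intro t ht
    obtain ⟨hmem, hVI⟩ := huα t ht
    have h1 := hVI ustst hustM
    have h2 := hustVI (uα t) hmem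
    have h3 := hmono (uα t) hmem ustst hustM
    have key : t * ⟪uα t, ustst - uα t⟫ ≥ 0 := by
      simp only [inner_sub_left, inner_add_left, real_inner_smul_left,
        inner_sub_right] at h1 h2 h3 ⊢
      linarith
    have := le_of_mul_le_mul_left (by linarith : t * 0 ≤ t * ⟪uα t, ustst - uα t⟫) ht
    linarith
  -- Step B : ‖uα t‖ ≤ ‖ustst‖
  have hB : ∀ t > (0:ℝ), ‖uα t‖ ≤ ‖ustst‖ := by
    intro t ht
    have h := hA t ht
    rw [inner_sub_right, real_inner_self_eq_norm_sq] at h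
    have hcs := real_inner_le_norm (uα t) ustst
    nlinarith [norm_nonneg (uα t), norm_nonneg ustst]
  -- Step C : key monotonicity inequality
  have hkey : ∀ s > (0:ℝ), ∀ t, s ≤ t →
      ‖uα t - uα s‖ ^ 2 ≤ ‖uα s‖ ^ 2 - ‖uα t‖ ^ 2 := by
    intro s hs t hst
    rcases eq_or_lt_of_le hst with rfl | hlt
    · simp
    have ht : 0 < t := hs.trans hlt
    obtain ⟨hmems, hVIs⟩ := huα s hs
    obtain ⟨hmemt, hVIt⟩ := huα t ht
    have h1 := hVIs (uα t) hmemt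
    have h2 := hVIt (uα s) hmems
    have h3 := hmono (uα s) hmems (uα t) hmemt
    have hc := real_inner_comm (uα s) (uα t)
    -- hP : s * ⟪us, ut - us⟫ + t * ⟪ut, us - ut⟫ ≥ 0
    have hP : s * ⟪uα s, uα t⟫ - s * ⟪uα s, uα s⟫
        + t * ⟪uα s, uα t⟫ - t * ⟪uα t, uα t⟫ ≥ 0 := by
      simp only [inner_sub_left, inner_add_left, real_inner_smul_left,
        inner_sub_right] at h1 h2 h3
      rw [hc] at h2
      linarith
    set n := ‖uα s‖ with hn
    set m := ‖uα t‖ with hm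
    have hns : ⟪uα s, uα s⟫ = n ^ 2 := real_inner_self_eq_norm_sq _
    have hms : ⟪uα t, uα t⟫ = m ^ 2 := real_inner_self_eq_norm_sq _
    set p := ⟪uα s, uα t⟫ with hp
    have hP' : s * n ^ 2 + t * m ^ 2 ≤ (s + t) * p := by
      rw [hns, hms] at hP; ring_nf; ring_nf at hP; linarith
    have hcs : p ≤ n * m := real_inner_le_norm _ _
    have hn0 : 0 ≤ n := norm_nonneg _
    have hm0 : 0 ≤ m := norm_nonneg _
    -- show p ≥ m ^ 2
    have hpm : m ^ 2 ≤ p := by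
      by_contra hno
      push_neg at hno
      have h2' : (s + t) * p < (s + t) * m ^ 2 :=
        mul_lt_mul_of_pos_left hno (by linarith)
      have hn2 : s * n ^ 2 < s * m ^ 2 := by nlinarith
      have hn2' : n ^ 2 < m ^ 2 := lt_of_mul_lt_mul_left hn2 (le_of_lt hs)
      have hnm : n < m := lt_of_pow_lt_pow_left₀ 2 hm0 hn2'
      have hmpos : 0 < m := lt_of_le_of_lt hn0 hnm
      have hcs' : (s + t) * p ≤ (s + t) * (n * m) :=
        mul_le_mul_of_nonneg_left hcs (by linarith)
      -- s n² + t m² ≤ (s+t) n m ⇒ t m (m - n) ≤ s n (m - n) ⇒ t m ≤ s n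
      have h4 : t * m * (m - n) ≤ s * n * (m - n) := by nlinarith
      have h5 : t * m ≤ s * n := le_of_mul_le_mul_right h4 (by linarith)
      nlinarith
    rw [norm_sub_sq_real, hc, ← hn, ← hm]
    linarith
  -- g is antitone
  set g : ℝ → ℝ := fun t => ‖uα t‖ ^ 2 with hg
  have hanti : ∀ s > (0:ℝ), ∀ t, s ≤ t → g t ≤ g s := by
    intro s hs t hst
    have := hkey s hs t hst
    have h0 := sq_nonneg ‖uα t - uα s‖
    simp only [hg]
    nlinarith
  have hgbdd : ∀ t > (0:ℝ), g t ≤ ‖ustst‖ ^ 2 := by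
    intro t ht
    have := hB t ht
    have := norm_nonneg (uα t)
    simp only [hg]; nlinarith
  -- sSup of g on Ioi 0
  set L := sSup (g '' Set.Ioi 0) with hL
  have hne : (g '' Set.Ioi 0).Nonempty := ⟨g 1, 1, by norm_num, rfl⟩
  have hbdda : BddAbove (g '' Set.Ioi 0) := by
    refine ⟨‖ustst‖ ^ 2, ?_⟩
    rintro x ⟨t, ht, rfl⟩
    exact hgbdd t ht
  have hgleL : ∀ t > (0:ℝ), g t ≤ L := fun t ht =>
    le_csSup hbdda ⟨t, ht, rfl⟩
  -- Cauchy
  have hcauchy : Cauchy (Filter.map uα (nhdsWithin 0 (Set.Ioi 0))) := by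
    rw [Metric.cauchy_iff]
    refine ⟨Filter.map_neBot, ?_⟩
    intro ε hε
    obtain ⟨y, ⟨s₀, hs₀, rfl⟩, hy⟩ :
        ∃ y ∈ g '' Set.Ioi 0, L - ε ^ 2 < y :=
      exists_lt_of_lt_csSup hne (by nlinarith)
    refine ⟨uα '' Set.Ioc 0 s₀, Filter.image_mem_map
      (Ioc_mem_nhdsGT_of_mem ⟨le_refl 0, hs₀⟩), ?_⟩
    have main : ∀ p ∈ Set.Ioc (0:ℝ) s₀, ∀ q ∈ Set.Ioc (0:ℝ) s₀, p ≤ q →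
        dist (uα p) (uα q) < ε := by
      intro p hp q hq hpq
      have h1 : ‖uα q - uα p‖ ^ 2 ≤ g p - g q := hkey p hp.1 q hpq
      have h2 : g p ≤ L := hgleL p hp.1
      have h3 : g s₀ ≤ g q := hanti q hq.1 s₀ hq.2
      have h4 : ‖uα q - uα p‖ ^ 2 < ε ^ 2 := by linarith
      rw [dist_eq_norm, ← norm_neg]
      have : -(uα p - uα q) = uα q - uα p := by abel
      rw [this]
      nlinarith [norm_nonneg (uα q - uα p)]
    rintro x ⟨p, hp, rfl⟩ y ⟨q, hq, rfl⟩
    rcases le_total p q with h | h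
    · exact main p hp q hq h
    · rw [dist_comm]; exact main q hq p hp h
  obtain ⟨ubar, hubar⟩ := CompleteSpace.complete hcauchy
  have hconv : Tendsto uα (nhdsWithin 0 (Set.Ioi 0)) (nhds ubar) := hubar
  -- sequence
  set tseq : ℕ → ℝ := fun n => 1 / ((n : ℝ) + 1) with htseq
  have htpos : ∀ n, 0 < tseq n := fun n => by positivity
  have ht0 : Tendsto tseq atTop (nhds 0) := tendsto_one_div_add_atTop_nhds_zero_nat
  have htW : Tendsto tseq atTop (nhdsWithin 0 (Set.Ioi 0)) :=
    tendsto_nhdsWithin_of_tendsto_nhds_of_eventually_within _ ht0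
      (Filter.Eventually.of_forall fun n => htpos n)
  set sn : ℕ → H := fun n => uα (tseq n) with hsn
  have hs : Tendsto sn atTop (nhds ubar) := hconv.comp htW
  have hsnM : ∀ n, sn n ∈ M := fun n => (huα _ (htpos n)).1
  have hubarM : ubar ∈ M :=
    hM.mem_of_tendsto hs (Filter.Eventually.of_forall hsnM)
  -- bound on F values
  obtain ⟨C, hC⟩ := isBounded_iff_forall_norm_le.mp
    (hbdd (Metric.closedBall 0 ‖ustst‖) Metric.isBounded_closedBall)
  have hFC : ∀ t > (0:ℝ), ‖F (uα t)‖ ≤ C := by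
    intro t ht
    exact hC _ ⟨uα t, by
      simp only [Metric.mem_closedBall, dist_zero_right]
      exact hB t ht, rfl⟩
  -- ubar ∈ S
  have hubarS : ubar ∈ S := by
    rw [hS]
    refine ⟨hubarM, ?_⟩
    intro v hv
    -- the three pieces
    have hterm1 : Tendsto (fun n => ⟪F (sn n) - f, v - ubar⟫) atTop
        (nhds ⟪F ubar - f, v - ubar⟫) := by
      have := hdemi ubar sn hs (v - ubar)
      simp only [inner_sub_left]
      exact this.sub tendsto_const_nhds
    have hterm2 : Tendsto (fun n => ⟪F (sn n) - f, ubar - sn n⟫) atTop (nhds 0) := by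
      apply squeeze_zero_norm (a := fun n => (C + ‖f‖) * ‖ubar - sn n‖)
      · intro n
        have h1 : |⟪F (sn n) - f, ubar - sn n⟫| ≤ ‖F (sn n) - f‖ * ‖ubar - sn n‖ :=
          abs_real_inner_le_norm _ _
        have h2 : ‖F (sn n) - f‖ ≤ C + ‖f‖ := by
          have := norm_sub_le (F (sn n)) f
          have := hFC (tseq n) (htpos n)
          simp only [hsn]
          linarith
        calc ‖⟪F (sn n) - f, ubar - sn n⟫‖ = |⟪F (sn n) - f, ubar - sn n⟫| := rfl
          _ ≤ ‖F (sn n) - f‖ * ‖ubar - sn n‖ := h1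
          _ ≤ (C + ‖f‖) * ‖ubar - sn n‖ :=
            mul_le_mul_of_nonneg_right h2 (norm_nonneg _)
      · have hd : Tendsto (fun n => ‖ubar - sn n‖) atTop (nhds 0) := by
          have h := (tendsto_const_nhds (x := ubar) (f := atTop)).sub hs
          rw [sub_self] at h
          simpa using h.norm
        have := hd.const_mul (C + ‖f‖)
        rw [mul_zero] at this
        exact this
    have hterm3 : Tendsto (fun n => tseq n * ⟪sn n, v - sn n⟫) atTop (nhds 0) := by
      apply squeeze_zero_norm (a := fun n => tseq n * (‖ustst‖ * (‖v‖ + ‖ustst‖)))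
      · intro n
        have hb : ‖sn n‖ ≤ ‖ustst‖ := hB (tseq n) (htpos n)
        have h1 : |⟪sn n, v - sn n⟫| ≤ ‖sn n‖ * ‖v - sn n‖ := abs_real_inner_le_norm _ _
        have h2 : ‖v - sn n‖ ≤ ‖v‖ + ‖ustst‖ := by
          have := norm_sub_le v (sn n); linarith
        have h3 : ‖sn n‖ * ‖v - sn n‖ ≤ ‖ustst‖ * (‖v‖ + ‖ustst‖) := by
          apply mul_le_mul hb h2 (norm_nonneg _) (norm_nonneg _)
        rw [Real.norm_eq_abs, abs_mul, abs_of_pos (htpos n)]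
        exact mul_le_mul_of_nonneg_left (le_trans h1 h3) (le_of_lt (htpos n))
      · have := ht0.mul_const (‖ustst‖ * (‖v‖ + ‖ustst‖))
        rw [zero_mul] at this
        exact this
    have hsum : Tendsto (fun n => ⟪F (sn n) - f, v - ubar⟫
        + ⟪F (sn n) - f, ubar - sn n⟫ + tseq n * ⟪sn n, v - sn n⟫) atTop
        (nhds (⟪F ubar - f, v - ubar⟫ + 0 + 0)) :=
      (hterm1.add hterm2).add hterm3
    rw [add_zero, add_zero] at hsum
    refine ge_of_tendsto hsum (Filter.Eventually.of_forall fun n => ?_)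
    have hVI := (huα (tseq n) (htpos n)).2 v hv
    have hsplit : ⟪F (sn n) - f, v - ubar⟫ + ⟪F (sn n) - f, ubar - sn n⟫
        + tseq n * ⟪sn n, v - sn n⟫
        = ⟪F (uα (tseq n)) + tseq n • uα (tseq n) - f, v - uα (tseq n)⟫ := by
      simp only [hsn, inner_sub_left, inner_add_left, real_inner_smul_left,
        inner_sub_right]
      ring
    rw [hsplit]
    exact hVI
  -- ubar = ustst
  have hnorm_le : ‖ubar‖ ≤ ‖ustst‖ :=
    le_of_tendsto hs.norm (Filter.Eventually.of_forall fun n => hB (tseq n) (htpos n))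
  have hnorm_ge : ‖ustst‖ ≤ ‖ubar‖ := hmin.2 ubar hubarS
  have hAlim : ⟪ubar, ustst - ubar⟫ ≥ 0 := by
    have htd : Tendsto (fun n => ⟪sn n, ustst - sn n⟫) atTop
        (nhds ⟪ubar, ustst - ubar⟫) :=
      hs.inner (tendsto_const_nhds.sub hs)
    exact ge_of_tendsto htd (Filter.Eventually.of_forall fun n => hA (tseq n) (htpos n))
  have hueq : ubar = ustst := by
    have h1 : ⟪ubar, ustst⟫ ≥ ‖ubar‖ ^ 2 := by
      rw [inner_sub_right, real_inner_self_eq_norm_sq] at hAlim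
      linarith
    have h2 : ‖ubar - ustst‖ ^ 2 ≤ 0 := by
      rw [norm_sub_sq_real]
      have : ‖ustst‖ = ‖ubar‖ := le_antisymm (by linarith) (by linarith)
      rw [this]
      linarith
    have h3 : ‖ubar - ustst‖ = 0 := by
      nlinarith [norm_nonneg (ubar - ustst)]
    have := norm_sub_eq_zero_iff.mp h3
    exact this
  -- stability
  have hstab : ∀ δ > (0:ℝ), ‖uδ δ - uα (α δ)‖ ≤ δ / α δ := by
    intro δ hδ
    have ht : 0 < α δ := hαpos δ hδ
    obtain ⟨haM, haVI⟩ := huα (α δ) ht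
    obtain ⟨hbM, hbVI⟩ := huδ δ hδ
    have h1 := haVI (uδ δ) hbM
    have h2 := hbVI (uα (α δ)) haM
    have h3 := hmono (uα (α δ)) haM (uδ δ) hbM
    have hc := real_inner_comm (uα (α δ)) (uδ δ)
    have hsum : α δ * ‖uα (α δ) - uδ δ‖ ^ 2 ≤ ⟪f - fδ δ, uα (α δ) - uδ δ⟫ := by
      have hns : ‖uα (α δ) - uδ δ‖ ^ 2 = ⟪uα (α δ) - uδ δ, uα (α δ) - uδ δ⟫ :=
        (real_inner_self_eq_norm_sq _).symm
      have hid : ⟪F (uα (α δ)) + α δ • uα (α δ) - f, uδ δ - uα (α δ)⟫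
          + ⟪F (uδ δ) + α δ • uδ δ - fδ δ, uα (α δ) - uδ δ⟫
          + ⟪F (uα (α δ)) - F (uδ δ), uα (α δ) - uδ δ⟫
          + α δ * ⟪uα (α δ) - uδ δ, uα (α δ) - uδ δ⟫
          = ⟪f - fδ δ, uα (α δ) - uδ δ⟫ := by
        simp only [inner_sub_left, inner_add_left, real_inner_smul_left,
          inner_sub_right]
        rw [real_inner_comm (uδ δ) (uα (α δ))]
        ring
      rw [hns]
      linarith
    have hcs : ⟪f - fδ δ, uα (α δ) - uδ δ⟫ ≤ ‖f - fδ δ‖ * ‖uα (α δ) - uδ δ‖ :=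
      real_inner_le_norm _ _
    have hδn : ‖f - fδ δ‖ ≤ δ := hnoise δ hδ
    have hkey2 : α δ * ‖uα (α δ) - uδ δ‖ ^ 2 ≤ δ * ‖uα (α δ) - uδ δ‖ := by
      have := mul_le_mul_of_nonneg_right hδn (norm_nonneg (uα (α δ) - uδ δ))
      linarith
    rw [norm_sub_rev]
    rcases eq_or_lt_of_le (norm_nonneg (uα (α δ) - uδ δ)) with h0 | h0
    · rw [← h0]; positivity
    · rw [le_div_iff₀ ht]
      nlinarith
  -- final convergence
  have hαtend : Tendsto α (nhdsWithin 0 (Set.Ioi 0)) (nhdsWithin 0 (Set.Ioi 0)) :=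
    tendsto_nhdsWithin_of_tendsto_nhds_of_eventually_within α hα0
      (eventually_mem_nhdsWithin.mono fun δ hδ => hαpos δ hδ)
  have h2 : Tendsto (fun δ => uα (α δ)) (nhdsWithin 0 (Set.Ioi 0)) (nhds ustst) := by
    rw [← hueq]
    exact hconv.comp hαtend
  have h1 : Tendsto (fun δ => uδ δ - uα (α δ)) (nhdsWithin 0 (Set.Ioi 0)) (nhds 0) := by
    exact squeeze_zero_norm'
      (eventually_mem_nhdsWithin.mono fun δ hδ => hstab δ hδ) hδα
  have := h1.add h2
  rw [zero_add] at this
  convert this using 1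
  funext δ
  abel
end
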